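/- Let a, b be coprime positive integers and n a positive integer. Let u = (u_1, …, u_{an}) be the step sequence of an (a,b)-Dyck path P of size n, and let h = (h_1, …, h_{bn}) be its height sequence, characterized by h_k = #{ j ∈ [1,an] : u_j ≤ k−1 }. Define H_m := h_{⌈m/a⌉} for 1 ≤ m ≤ abn and 𝔥_i(j) := H_{i+(j−1)b} for 1 ≤ i ≤ b, 1 ≤ j ≤ an (the height sequences of the horizontal strip-decomposition δ(P) = (q_1,…,q_b)). Define v_1, …, v_b entrywise from w := a·u by v_1 := ⌈w/b⌉ and v_i := ⌈(w − (v_1 + … + v_{i−1}))/(b−i+1)⌉ for 2 ≤ i ≤ b. Then for every 1 ≤ i ≤ b and every 1 ≤ j ≤ an, #{ k ∈ [1,an] : 𝔥_i(k) < j } = v_i(j); that is, the step sequence of the path q_i is v_i. -/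
import Mathlib

/-- `Spartial b w i = v 1 + ⋯ + v i`, where `v 1 = ⌈w/b⌉` and
`v i = ⌈(w - (v 1 + ⋯ + v (i-1)))/(b-i+1)⌉`.  (For naturals,
`⌈x/d⌉ = (x + d - 1)/d`.) -/
def Spartial (b w : ℕ) : ℕ → ℕ
  | 0 => 0
  | k + 1 => Spartial b w k + (w - Spartial b w k + (b - k) - 1) / (b - k)

/-- `vval b w i = v i`, the `i`-th term of the greedy ceiling decomposition of
`w` into `b` parts. -/
def vval (b w i : ℕ) : ℕ := Spartial b w i - Spartial b w (i - 1)

lemma hermite (b : ℕ) (hb : 0 < b) : ∀ w : ℕ, ∑ r ∈ Finset.range b, (w + r) / b = w := by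
  intro w
  induction w with
  | zero =>
    apply Finset.sum_eq_zero
    intro r hr
    have := Finset.mem_range.mp hr
    simp [Nat.div_eq_of_lt this]
  | succ w IH =>
    have h1 : ∑ r ∈ Finset.range (b+1), (w + r) / b
        = ∑ r ∈ Finset.range b, (w + (r+1)) / b + (w + 0) / b :=
      Finset.sum_range_succ' _ _
    have h2 : ∑ r ∈ Finset.range (b+1), (w + r) / b
        = ∑ r ∈ Finset.range b, (w + r) / b + (w + b) / b :=
      Finset.sum_range_succ _ _
    have h3 : (w + b) / b = w / b + 1 := Nat.add_div_right _ hb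
    have h4 : ∀ r ∈ Finset.range b, (w + 1 + r) / b = (w + (r+1)) / b := by
      intro r _; congr 1; omega
    simp only [Nat.add_zero] at h1
    rw [Finset.sum_congr rfl h4]
    omega

lemma spartial_closed (b w : ℕ) (hb : 0 < b) :
    ∀ k, k ≤ b → Spartial b w k = ∑ i ∈ Finset.range k, (w + b - (i+1)) / b := by
  intro k
  induction k with
  | zero => intro _; simp [Spartial]
  | succ k IH =>
    intro hk1
    have hkb : k < b := hk1
    have hIH := IH (le_of_lt hkb)
    set f : ℕ → ℕ := fun i => (w + b - (i+1)) / b with hf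
    have htot : ∑ i ∈ Finset.range b, f i = w := by
      rw [← Finset.sum_range_reflect]
      have h4 : ∀ j ∈ Finset.range b, f (b - 1 - j) = (w + j) / b := by
        intro j hj
        have := Finset.mem_range.mp hj
        simp only [hf]
        congr 1
        omega
      rw [Finset.sum_congr rfl h4, hermite b hb w]
    obtain ⟨R, hR⟩ : ∃ R, R = ∑ i ∈ Finset.Ico k b, f i := ⟨_, rfl⟩
    obtain ⟨c, hc⟩ : ∃ c, c = f k := ⟨_, rfl⟩
    obtain ⟨T, hT⟩ : ∃ T, T = ∑ i ∈ Finset.Ico (k+1) b, f i := ⟨_, rfl⟩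
    have hsplit : ∑ i ∈ Finset.range k, f i + R = w := by
      rw [hR, Finset.sum_range_add_sum_Ico f (le_of_lt hkb)]
      exact htot
    have hub : R ≤ (b - k) * c := by
      rw [hR, hc]
      have := Finset.sum_le_card_nsmul (Finset.Ico k b) f (f k) (by
        intro i hi
        have := Finset.mem_Ico.mp hi
        exact Nat.div_le_div_right (by omega))
      simpa [Nat.card_Ico, smul_eq_mul] using this
    have hstep : Spartial b w (k+1)
        = Spartial b w k + (w - Spartial b w k + (b - k) - 1) / (b - k) := rfl
    rw [hstep, hIH, Finset.sum_range_succ]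
    congr 1
    · have hwS : w - ∑ i ∈ Finset.range k, f i = R := by omega
      rw [hwS, show (w + b - (k+1)) / b = c from hc.symm]
      rcases Nat.eq_zero_or_pos c with hc0 | hc1
      · subst hc0
        have hR0 : R = 0 := by omega
        rw [hR0]
        exact Nat.div_eq_of_lt (by omega)
      · have hsplit2 : R = c + T := by
          rw [hR, hc, hT]
          exact Finset.sum_eq_sum_Ico_succ_bot hkb f
        have hgap : ∀ i' ∈ Finset.Ico (k+1) b, c - 1 ≤ f i' := by
          intro i' hi'
          have hm := Finset.mem_Ico.mp hi'
          have h2 : c ≤ f i' + 1 := by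
            rw [hc]
            calc f k = (w + b - (k+1)) / b := rfl
            _ ≤ ((w + b - (i'+1)) + b) / b := Nat.div_le_div_right (by omega)
            _ = f i' + 1 := Nat.add_div_right _ hb
          omega
        have hlb2 : (b - (k+1)) * (c - 1) ≤ T := by
          rw [hT]
          have := Finset.card_nsmul_le_sum (Finset.Ico (k+1) b) f (c-1) hgap
          simpa [Nat.card_Ico, smul_eq_mul] using this
        obtain ⟨m', hm'⟩ : ∃ m', b - k = m' + 1 := ⟨b - k - 1, by omega⟩
        obtain ⟨c', hc'⟩ : ∃ c', c = c' + 1 := ⟨c - 1, by omega⟩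
        subst hc'
        have hbk1 : b - (k+1) = m' := by omega
        rw [hbk1] at hlb2
        rw [hm'] at hub ⊢
        have he : R + (m' + 1) - 1 = R + m' := by omega
        rw [he]
        have hlb3 : m' * c' ≤ T := by simpa using hlb2
        apply Nat.div_eq_of_lt_le
        · nlinarith
        · nlinarith

lemma vval_closed (b w i : ℕ) (hb : 0 < b) (hi : 1 ≤ i) (hib : i ≤ b) :
    vval b w i = (w + b - i) / b := by
  obtain ⟨i', rfl⟩ : ∃ i', i = i' + 1 := ⟨i - 1, by omega⟩
  unfold vval
  rw [Nat.add_sub_cancel, spartial_closed b w hb (i'+1) hib,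
    spartial_closed b w hb i' (by omega), Finset.sum_range_succ]
  exact Nat.add_sub_cancel_left _ _

/-- let `u` be the step sequence of an (a,b)-Dyck path of size `n`
and `h` its height sequence, `h k = #{ j ∈ [1,a*n] : u j ≤ k-1 }`.  With
`H m := h ⌈m/a⌉` and `𝔥 i (j) := H (i + (j-1)*b)` the height sequences of the
horizontal strip-decomposition, and `v i` the greedy ceiling decompositions of
`w := a·u` into `b` parts, the step sequence of the `i`-th strip path is
`v i`:  `#{ k ∈ [1,a*n] : 𝔥 i (k) < j } = v i (j)`. -/
theorem horizontal_strip_step_sequence (a b n : ℕ)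
    (ha : 0 < a) (hb : 0 < b) (hn : 0 < n) (hab : Nat.Coprime a b)
    (u h : ℕ → ℕ)
    (humono : ∀ k l, 1 ≤ k → k ≤ l → l ≤ a * n → u k ≤ u l)
    (hubound : ∀ k, 1 ≤ k → k ≤ a * n → a * u k ≤ b * (k - 1))
    (hh : ∀ k, 1 ≤ k → k ≤ b * n →
      h k = ((Finset.Icc 1 (a * n)).filter (fun j => u j ≤ k - 1)).card) :
    ∀ i j, 1 ≤ i → i ≤ b → 1 ≤ j → j ≤ a * n →
      ((Finset.Icc 1 (a * n)).filter
          (fun k => h ((i + (k - 1) * b + a - 1) / a) < j)).card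
        = vval b (a * u j) i := by
  intro i j hi1 hib hj1 hjN
  have hN1 : 1 ≤ a * n := le_trans hj1 hjN
  have hw : a * u j ≤ b * (j - 1) := hubound j hj1 hjN
  have hbj : b * (j - 1) + b = b * j := by
    rw [← Nat.mul_succ]; congr 1; omega
  have hcj : (a * u j + b - i) / b < j := by
    rw [Nat.div_lt_iff_lt_mul hb]
    have hcm : j * b = b * j := Nat.mul_comm _ _
    omega
  have hcond : ∀ k, 1 ≤ k → k ≤ a * n →
      (h ((i + (k - 1) * b + a - 1) / a) < j ↔ k ≤ (a * u j + b - i) / b) := by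
    intro k hk1 hkN
    obtain ⟨k', rfl⟩ : ∃ k', k = k' + 1 := ⟨k - 1, by omega⟩
    simp only [Nat.add_sub_cancel]
    have hxub : i + k' * b ≤ a * n * b := by
      have h1 : k' * b ≤ (a * n - 1) * b := Nat.mul_le_mul_right _ (by omega)
      have h2 : (a * n - 1) * b + b = a * n * b := by
        rw [← Nat.succ_mul]; congr 1; omega
      omega
    have hm1 : 1 ≤ (i + k' * b + a - 1) / a := by
      rw [Nat.le_div_iff_mul_le ha]; omega
    have hm2 : (i + k' * b + a - 1) / a ≤ b * n := by
      have hlt : (i + k' * b + a - 1) / a < b * n + 1 := by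
        rw [Nat.div_lt_iff_lt_mul ha]
        have h3 : (b * n + 1) * a = b * n * a + a := Nat.succ_mul _ _
        have h4 : a * n * b = b * n * a := by ring
        omega
      omega
    rw [hh _ hm1 hm2]
    have key1 : (((Finset.Icc 1 (a * n)).filter
        (fun j' => u j' ≤ (i + k' * b + a - 1) / a - 1)).card < j)
        ↔ ((i + k' * b + a - 1) / a ≤ u j) := by
      constructor
      · intro hcard
        by_contra hnot
        push_neg at hnot
        have hsub : Finset.Icc 1 j ⊆ (Finset.Icc 1 (a * n)).filter
            (fun j' => u j' ≤ (i + k' * b + a - 1) / a - 1) := by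
          intro j' hj'
          have hj'2 := Finset.mem_Icc.mp hj'
          refine Finset.mem_filter.mpr ⟨Finset.mem_Icc.mpr ⟨hj'2.1, le_trans hj'2.2 hjN⟩, ?_⟩
          have := humono j' j hj'2.1 hj'2.2 hjN
          omega
        have := Finset.card_le_card hsub
        rw [Nat.card_Icc] at this
        omega
      · intro hle
        have hsub : (Finset.Icc 1 (a * n)).filter
            (fun j' => u j' ≤ (i + k' * b + a - 1) / a - 1) ⊆ Finset.Icc 1 (j - 1) := by
          intro j' hj'
          obtain ⟨hj'3, hj'4⟩ := Finset.mem_filter.mp hj'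
          have hj'5 := Finset.mem_Icc.mp hj'3
          refine Finset.mem_Icc.mpr ⟨hj'5.1, ?_⟩
          by_contra hlt
          push_neg at hlt
          have := humono j j' hj1 (by omega) hj'5.2
          omega
        have := Finset.card_le_card hsub
        rw [Nat.card_Icc] at this
        omega
    rw [key1, Nat.div_le_iff_le_mul_add_pred ha, Nat.le_div_iff_mul_le hb]
    have e1 : (k' + 1) * b = k' * b + b := Nat.succ_mul _ _
    omega
  have hfe : (Finset.Icc 1 (a * n)).filter
      (fun k => h ((i + (k - 1) * b + a - 1) / a) < j)
      = Finset.Icc 1 ((a * u j + b - i) / b) := by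
    ext k
    simp only [Finset.mem_filter, Finset.mem_Icc]
    constructor
    · rintro ⟨⟨h1, h2⟩, h3⟩
      exact ⟨h1, (hcond k h1 h2).mp h3⟩
    · rintro ⟨h1, h2⟩
      have h2' : k ≤ a * n := by omega
      exact ⟨⟨h1, h2'⟩, (hcond k h1 h2').mpr h2⟩
  rw [hfe, Nat.card_Icc, vval_closed b (a * u j) i hb hi1 hib]
  exact Nat.add_sub_cancel _ _
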